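/- arXiv:2209.11684 — 3 statements merged into one kernel-verified Lean document; each statement's English description precedes it below -/
import Mathlib

section
/- Let Φ : M_d → M_d be a unital positive linear map. Then for every positive definite matrix x, Φ(log x) ≤ log Φ(x) in the Loewner (positive semidefinite) order. -/
/-!
Integrating `(1 + s)⁻¹ - (t + s)⁻¹` over `s > 0` gives `log t`, so after pairing with a vector
both `Φ (log x)` and `log (Φ x)` become scalar integrals over `s > 0`, and it suffices to compare
the integrands: `(Φ x + s)⁻¹ ≤ Φ ((x + s)⁻¹)`. As `Φ` is unital this is Choi's inequality
`Φ(a)⁻¹ ≤ Φ(a⁻¹)` for `a = x + s`. Writing `a = ∑ λᵢ Pᵢ` spectrally, the matrices `Qᵢ = Φ Pᵢ` are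
positive semidefinite with `∑ Qᵢ = 1`, and for `M = ∑ λᵢ Qᵢ` one has
`∑ λᵢ⁻¹ Qᵢ - M⁻¹ = ∑ (M⁻¹ - λᵢ⁻¹) (λᵢ Qᵢ) (M⁻¹ - λᵢ⁻¹) ≥ 0`.
-/

open Matrix
open scoped ComplexOrder

noncomputable section

variable {d : ℕ}

/-- Matrix logarithm of a Hermitian matrix via spectral decomposition (junk value `0`
otherwise). -/
def mlog (A : Matrix (Fin d) (Fin d) ℂ) : Matrix (Fin d) (Fin d) ℂ :=
  if hA : A.IsHermitian then
    (hA.eigenvectorUnitary : Matrix (Fin d) (Fin d) ℂ) *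
      Matrix.diagonal (fun i => (Real.log (hA.eigenvalues i) : ℂ)) *
      star (hA.eigenvectorUnitary : Matrix (Fin d) (Fin d) ℂ)
  else 0

open Unitary MeasureTheory Set Filter Topology
open scoped MatrixOrder

namespace Real

lemma hasDerivAt_log_one_add_sub_log_add {t s : ℝ} (ht : 0 < t) (hs : 0 ≤ s) :
    HasDerivAt (fun s => log (1 + s) - log (t + s)) ((1 + s)⁻¹ - (t + s)⁻¹) s :=
  (((hasDerivAt_id s).const_add 1).log (by positivity)).sub
    (((hasDerivAt_id s).const_add t).log (by positivity)) |>.congr_deriv (by simp)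

lemma tendsto_log_one_add_sub_log_add (t : ℝ) :
    Tendsto (fun s => log (1 + s) - log (t + s)) atTop (𝓝 0) := by
  simpa [add_comm] using (tendsto_log_comp_add_sub_log 1).sub (tendsto_log_comp_add_sub_log t)

lemma integrableOn_inv_one_add_sub_inv_add {t : ℝ} (ht : 0 < t) :
    IntegrableOn (fun s => (1 + s)⁻¹ - (t + s)⁻¹) (Ioi (0 : ℝ)) := by
  have hderiv := fun s (hs : s ∈ Ici (0 : ℝ)) => hasDerivAt_log_one_add_sub_log_add ht hs
  rcases le_total 1 t with h | h
  · refine integrableOn_Ioi_deriv_of_nonneg' hderiv (fun s hs => ?_)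
      (tendsto_log_one_add_sub_log_add t)
    exact sub_nonneg.2 (inv_anti₀ (by linarith [hs.out]) (by linarith))
  · refine integrableOn_Ioi_deriv_of_nonpos' hderiv (fun s hs => ?_)
      (tendsto_log_one_add_sub_log_add t)
    exact sub_nonpos.2 (inv_anti₀ (by linarith [hs.out]) (by linarith))

lemma integral_inv_one_add_sub_inv_add {t : ℝ} (ht : 0 < t) :
    ∫ s in Ioi (0 : ℝ), ((1 + s)⁻¹ - (t + s)⁻¹) = log t := by
  rw [integral_Ioi_of_hasDerivAt_of_tendsto' (fun s hs => hasDerivAt_log_one_add_sub_log_add ht hs)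
    (integrableOn_inv_one_add_sub_inv_add ht) (tendsto_log_one_add_sub_log_add t)]
  simp

end Real

namespace Matrix

variable {n 𝕜 : Type*} [RCLike 𝕜]

section QuadForm

variable [Fintype n] {A : Matrix n n 𝕜}

def reQuadForm (v : n → 𝕜) : Matrix n n 𝕜 →ₗ[ℝ] ℝ where
  toFun M := RCLike.re (star v ⬝ᵥ M *ᵥ v)
  map_add' M N := by simp [add_mulVec]
  map_smul' r M := by simp [smul_mulVec, RCLike.real_smul_eq_coe_mul]

lemma reQuadForm_mono (v : n → 𝕜) : Monotone (reQuadForm v) := fun M N h => by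
  rw [← sub_nonneg, ← map_sub]
  exact (le_iff.1 h).re_dotProduct_nonneg v

lemma IsHermitian.posSemidef_of_reQuadForm_nonneg (hA : A.IsHermitian)
    (h : ∀ v, 0 ≤ reQuadForm v A) : A.PosSemidef :=
  .of_dotProduct_mulVec_nonneg hA fun v =>
    RCLike.nonneg_iff.2 ⟨h v, hA.im_star_dotProduct_mulVec_self v⟩

end QuadForm

section SumSmul

variable [DecidableEq n] {ι : Type*} [Fintype ι] {Q : ι → Matrix n n 𝕜} {a : ι → ℝ}

lemma posDef_sum_smul (hQ : ∀ i, (Q i).PosSemidef) (hsum : ∑ i, Q i = 1) (ha : ∀ i, 0 < a i) :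
    (∑ i, a i • Q i).PosDef := by
  obtain ⟨ε, hε, hεa⟩ : ∃ ε > 0, ∀ i, ε ≤ a i := by
    cases isEmpty_or_nonempty ι
    · exact ⟨1, one_pos, isEmptyElim⟩
    · obtain ⟨i, hi⟩ := Finite.exists_min a
      exact ⟨a i, ha i, hi⟩
  have hsplit : ∑ i, a i • Q i = ε • 1 + ∑ i, (a i - ε) • Q i := by
    simp [sub_smul, Finset.sum_sub_distrib, ← Finset.smul_sum, hsum]
  rw [hsplit]
  exact (PosDef.one.smul hε).add_posSemidef
    (posSemidef_sum _ fun i _ => (hQ i).smul (sub_nonneg.2 (hεa i)))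

lemma inv_sum_smul_le_sum_inv_smul [Fintype n] (hQ : ∀ i, (Q i).PosSemidef)
    (hsum : ∑ i, Q i = 1) (ha : ∀ i, 0 < a i) : (∑ i, a i • Q i)⁻¹ ≤ ∑ i, (a i)⁻¹ • Q i := by
  have hM := posDef_sum_smul hQ hsum ha
  set M := ∑ i, a i • Q i with hMdef
  clear_value M
  have hMinv : M⁻¹ * M = 1 := nonsing_inv_mul M ((isUnit_iff_isUnit_det M).1 hM.isUnit)
  have hterm : ∀ i, (M⁻¹ - (a i)⁻¹ • 1)ᴴ * (a i • Q i) * (M⁻¹ - (a i)⁻¹ • 1) =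
      M⁻¹ * (a i • Q i) * M⁻¹ - M⁻¹ * Q i - Q i * M⁻¹ + (a i)⁻¹ • Q i := by
    intro i
    have hai := (ha i).ne'
    rw [conjTranspose_sub, hM.inv.isHermitian.eq, conjTranspose_smul, conjTranspose_one,
      star_trivial]
    simp only [sub_mul, mul_sub, smul_sub, smul_mul_assoc, mul_smul_comm, smul_smul, one_mul,
      mul_one, mul_assoc, inv_mul_cancel₀ hai, mul_inv_cancel₀ hai, one_smul]
    abel
  have hsum_terms : ∑ i, (M⁻¹ - (a i)⁻¹ • 1)ᴴ * (a i • Q i) * (M⁻¹ - (a i)⁻¹ • 1) =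
      ∑ i, (a i)⁻¹ • Q i - M⁻¹ := by
    simp only [hterm, Finset.sum_add_distrib, Finset.sum_sub_distrib, ← Finset.mul_sum,
      ← Finset.sum_mul, ← hMdef, hsum, hMinv, one_mul, mul_one]
    abel
  rw [le_iff, ← hsum_terms]
  exact posSemidef_sum _ fun i _ => ((hQ i).smul (ha i).le).conjTranspose_mul_mul_same _

end SumSmul

variable [Fintype n] [DecidableEq n] {A : Matrix n n 𝕜}

namespace IsHermitian

variable (hA : A.IsHermitian)

def eigenProj (i : n) : Matrix n n 𝕜 :=
  conjStarAlgAut 𝕜 _ hA.eigenvectorUnitary (diagonal (Pi.single i 1))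

lemma posSemidef_eigenProj (i : n) : (hA.eigenProj i).PosSemidef := by
  rw [eigenProj, conjStarAlgAut_apply, star_eq_conjTranspose]
  exact (PosSemidef.diagonal (Pi.single_nonneg.2 zero_le_one)).mul_mul_conjTranspose_same _

lemma cfc_eq_sum_smul_eigenProj (f : ℝ → ℝ) :
    cfc f A = ∑ i, f (hA.eigenvalues i) • hA.eigenProj i := by
  have hdiag : diagonal (RCLike.ofReal ∘ f ∘ hA.eigenvalues) =
      ∑ i, (f (hA.eigenvalues i) : 𝕜) • diagonal (Pi.single i (1 : 𝕜)) := by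
    ext j k
    by_cases hjk : j = k <;> simp [Pi.single_apply, sum_apply, hjk, RCLike.real_smul_eq_coe_mul]
  rw [hA.cfc_eq, IsHermitian.cfc, hdiag, map_sum]
  exact Finset.sum_congr rfl fun i _ => by
    rw [map_smul, eigenProj, RCLike.real_smul_eq_coe_smul (K := 𝕜)]

lemma sum_eigenProj : ∑ i, hA.eigenProj i = 1 := by
  simpa using (hA.cfc_eq_sum_smul_eigenProj fun _ => 1).symm.trans (cfc_const_one ℝ A)

lemma map_cfc {E : Type*} [AddCommMonoid E] [Module ℝ E] (ψ : Matrix n n 𝕜 →ₗ[ℝ] E)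
    (f : ℝ → ℝ) : ψ (cfc f A) = ∑ i, f (hA.eigenvalues i) • ψ (hA.eigenProj i) := by
  simp [hA.cfc_eq_sum_smul_eigenProj]

end IsHermitian

namespace PosDef

lemma cfc_inv (hA : A.PosDef) : cfc (·⁻¹ : ℝ → ℝ) A = A⁻¹ :=
  (cfc_ringInverse_id (R := ℝ) A hA.isUnit hA.1).trans (nonsing_inv_eq_ringInverse A).symm

lemma cfc_inv_one_add_sub_inv_add (hA : A.PosDef) {s : ℝ} (hs : 0 ≤ s) :
    cfc (fun t => (1 + s)⁻¹ - (t + s)⁻¹) A = (1 + s)⁻¹ • 1 - (A + s • 1)⁻¹ := by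
  have hspec : ∀ t ∈ spectrum ℝ A, t + s ≠ 0 := by
    intro t ht
    rw [hA.1.spectrum_real_eq_range_eigenvalues] at ht
    obtain ⟨i, rfl⟩ := ht
    exact (add_pos_of_pos_of_nonneg (hA.eigenvalues_pos i) hs).ne'
  have hcont (f : ℝ → ℝ) : ContinuousOn f (spectrum ℝ A) := A.finite_real_spectrum.continuousOn f
  rw [cfc_sub _ _ A (hcont _) (hcont _), cfc_const _ A, _root_.cfc_inv (fun t => t + s) A hspec,
    cfc_add_const s (fun t => t) A, cfc_id' ℝ A, nonsing_inv_eq_ringInverse,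
    Algebra.algebraMap_eq_smul_one, Algebra.algebraMap_eq_smul_one]

end PosDef

section PositiveMap

variable {m : Type*} {Φ : Matrix n n 𝕜 →ₗ[𝕜] Matrix m m 𝕜}

lemma IsHermitian.map_cfc' (hA : A.IsHermitian) (f : ℝ → ℝ) :
    Φ (cfc f A) = ∑ i, f (hA.eigenvalues i) • Φ (hA.eigenProj i) :=
  hA.map_cfc (Φ.restrictScalars ℝ) f

lemma IsHermitian.isHermitian_map (hΦ : ∀ B, B.PosSemidef → (Φ B).PosSemidef)
    (hA : A.IsHermitian) : (Φ A).IsHermitian := by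
  rw [← cfc_id' ℝ A, hA.map_cfc']
  exact isSelfAdjoint_sum _ fun i _ =>
    .smul (.all _) (hΦ _ (hA.posSemidef_eigenProj i)).isHermitian

variable [DecidableEq m]

lemma IsHermitian.sum_map_eigenProj (hΦ1 : Φ 1 = 1) (hA : A.IsHermitian) :
    ∑ i, Φ (hA.eigenProj i) = 1 := by
  rw [← map_sum, hA.sum_eigenProj, hΦ1]

lemma PosDef.posDef_map (hΦ : ∀ B, B.PosSemidef → (Φ B).PosSemidef) (hΦ1 : Φ 1 = 1)
    (hA : A.PosDef) : (Φ A).PosDef := by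
  rw [← cfc_id' ℝ A, hA.1.map_cfc']
  exact posDef_sum_smul (fun i => hΦ _ (hA.1.posSemidef_eigenProj i))
    (hA.1.sum_map_eigenProj hΦ1) hA.eigenvalues_pos

theorem PosDef.inv_map_le_map_inv [Fintype m] (hΦ : ∀ B, B.PosSemidef → (Φ B).PosSemidef)
    (hΦ1 : Φ 1 = 1) (hA : A.PosDef) : (Φ A)⁻¹ ≤ Φ A⁻¹ := by
  rw [← hA.cfc_inv, hA.1.map_cfc']
  conv_lhs => rw [← cfc_id' ℝ A, hA.1.map_cfc']
  exact inv_sum_smul_le_sum_inv_smul (fun i => hΦ _ (hA.1.posSemidef_eigenProj i))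
    (hA.1.sum_map_eigenProj hΦ1) hA.eigenvalues_pos

end PositiveMap

namespace PosDef

variable (ψ : Matrix n n 𝕜 →ₗ[ℝ] ℝ)

lemma map_inv_one_add_sub_inv_add_eq_sum (hA : A.PosDef) {s : ℝ} (hs : 0 ≤ s) :
    ψ ((1 + s)⁻¹ • 1 - (A + s • 1)⁻¹) =
      ∑ i, ψ (hA.1.eigenProj i) * ((1 + s)⁻¹ - (hA.1.eigenvalues i + s)⁻¹) := by
  simp [← hA.cfc_inv_one_add_sub_inv_add hs, hA.1.map_cfc, mul_comm]

lemma integrableOn_map_inv_one_add_sub_inv_add (hA : A.PosDef) :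
    IntegrableOn (fun s => ψ ((1 + s)⁻¹ • 1 - (A + s • 1)⁻¹)) (Ioi (0 : ℝ)) := by
  refine IntegrableOn.congr_fun ?_
    (fun s hs => (hA.map_inv_one_add_sub_inv_add_eq_sum ψ (le_of_lt hs)).symm) measurableSet_Ioi
  exact integrable_finsetSum _ fun i _ =>
    (Real.integrableOn_inv_one_add_sub_inv_add (hA.eigenvalues_pos i)).const_mul _

lemma map_cfc_log_eq_integral (hA : A.PosDef) :
    ψ (cfc Real.log A) = ∫ s in Ioi (0 : ℝ), ψ ((1 + s)⁻¹ • 1 - (A + s • 1)⁻¹) := by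
  rw [setIntegral_congr_fun measurableSet_Ioi
      (fun s hs => hA.map_inv_one_add_sub_inv_add_eq_sum ψ (le_of_lt hs)),
    integral_finsetSum _ fun i _ =>
      (Real.integrableOn_inv_one_add_sub_inv_add (hA.eigenvalues_pos i)).const_mul _,
    hA.1.map_cfc]
  simp [integral_const_mul, Real.integral_inv_one_add_sub_inv_add (hA.eigenvalues_pos _), mul_comm]

end PosDef

end Matrix

lemma mlog_eq_cfc {A : Matrix (Fin d) (Fin d) ℂ} (hA : A.IsHermitian) :
    mlog A = cfc Real.log A := by
  rw [mlog, dif_pos hA, hA.cfc_eq, IsHermitian.cfc, conjStarAlgAut_apply]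
  rfl

/-- for a unital positive linear map `Φ` on `M_d` and positive definite `x`,
`Φ(log x) ≤ log Φ(x)` in the Loewner order (operator concavity of `log`). -/
theorem log_operator_concave_of_unital_positive
    (Φ : Matrix (Fin d) (Fin d) ℂ →ₗ[ℂ] Matrix (Fin d) (Fin d) ℂ)
    (hunital : Φ 1 = 1)
    (hpos : ∀ A : Matrix (Fin d) (Fin d) ℂ, A.PosSemidef → (Φ A).PosSemidef)
    (x : Matrix (Fin d) (Fin d) ℂ) (hx : x.PosDef) :
    (mlog (Φ x) - Φ (mlog x)).PosSemidef := by
  have hΦx : (Φ x).PosDef := hx.posDef_map hpos hunital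
  rw [mlog_eq_cfc hx.1, mlog_eq_cfc hΦx.1]
  have hherm : (cfc Real.log (Φ x) - Φ (cfc Real.log x)).IsHermitian :=
    (cfc_predicate Real.log (Φ x)).sub (IsHermitian.isHermitian_map hpos (cfc_predicate _ _))
  refine hherm.posSemidef_of_reQuadForm_nonneg fun v => ?_
  have hcomp : reQuadForm v (Φ (cfc Real.log x)) =
      (reQuadForm v ∘ₗ Φ.restrictScalars ℝ) (cfc Real.log x) := rfl
  rw [map_sub, sub_nonneg, hcomp, hx.map_cfc_log_eq_integral, hΦx.map_cfc_log_eq_integral]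
  refine setIntegral_mono_on (hx.integrableOn_map_inv_one_add_sub_inv_add _)
    (hΦx.integrableOn_map_inv_one_add_sub_inv_add _) measurableSet_Ioi fun s hs => ?_
  have hxs : (x + s • 1).PosDef := hx.add_posSemidef (PosSemidef.one.smul (le_of_lt hs))
  have hchoi := hxs.inv_map_le_map_inv hpos hunital
  rw [map_add, LinearMap.map_smul_of_tower, hunital] at hchoi
  simp only [LinearMap.comp_apply, LinearMap.restrictScalars_apply, map_sub,
    LinearMap.map_smul_of_tower, hunital]
  exact sub_le_sub_left (reQuadForm_mono v hchoi) _
end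
end

section
/- Let Φ : M_d → M_d be a unital quantum channel with multiplicative domain N = {x : Φ(y)Φ(x) = Φ(yx) and Φ(x)Φ(y) = Φ(xy) for all y}. Then Φ restricted to N is a *-homomorphism, and for all x, y in N, tr(Φ(x)Φ(y)) = tr(xy); in particular Φ*∘Φ restricted to N is the identity map, where Φ* is the trace adjoint of Φ. -/
open Matrix
open scoped ComplexOrder

noncomputable section

variable {d : ℕ}

/-- The ampliation `id_n ⊗ Φ` acting on block matrices. -/
def ampliation (Φ : Matrix (Fin d) (Fin d) ℂ →ₗ[ℂ] Matrix (Fin d) (Fin d) ℂ) (n : ℕ)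
    (M : Matrix (Fin n × Fin d) (Fin n × Fin d) ℂ) : Matrix (Fin n × Fin d) (Fin n × Fin d) ℂ :=
  fun p q => Φ (Matrix.of fun a b => M (p.1, a) (q.1, b)) p.2 q.2

/-- Complete positivity. -/
def IsCompletelyPositive (Φ : Matrix (Fin d) (Fin d) ℂ →ₗ[ℂ] Matrix (Fin d) (Fin d) ℂ) : Prop :=
  ∀ n : ℕ, ∀ M : Matrix (Fin n × Fin d) (Fin n × Fin d) ℂ,
    M.PosSemidef → (ampliation Φ n M).PosSemidef

/-- The multiplicative domain of a unital completely positive map. -/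
def multDomain (Φ : Matrix (Fin d) (Fin d) ℂ →ₗ[ℂ] Matrix (Fin d) (Fin d) ℂ) :
    Set (Matrix (Fin d) (Fin d) ℂ) :=
  {x | ∀ y : Matrix (Fin d) (Fin d) ℂ, Φ y * Φ x = Φ (y * x) ∧ Φ x * Φ y = Φ (x * y)}

/-!
For `x` in the multiplicative domain, `Φ (x * y) = Φ x * Φ y` for every `y`, so trace
preservation gives `tr (Φ x * Φ y) = tr (x * y)`, i.e. `tr (Φ* (Φ x) * y) = tr (x * y)` for all
`y`, which forces `Φ* (Φ x) = x`. Compatibility with `ᴴ` needs only positivity: a positive map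
sends self-adjoint matrices (differences of positive ones) to self-adjoint ones, and
`ℂ`-linearity extends this to `x = ℜ x + i ℑ x`.
-/

open scoped MatrixOrder ComplexStarModule

theorem LinearMap.map_star_of_map_isSelfAdjoint {E F : Type*} [AddCommGroup E] [Module ℂ E]
    [StarAddMonoid E] [StarModule ℂ E] [AddCommGroup F] [Module ℂ F] [StarAddMonoid F]
    [StarModule ℂ F] (f : E →ₗ[ℂ] F) (hf : ∀ a, IsSelfAdjoint a → IsSelfAdjoint (f a)) (x : E) :
    f (star x) = star (f x) := by
  have hre := (hf _ (ℜ x).2).star_eq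
  have him := (hf _ (ℑ x).2).star_eq
  conv_lhs => rw [← realPart_add_I_smul_imaginaryPart x]
  conv_rhs => rw [← realPart_add_I_smul_imaginaryPart x]
  simp [hre, him]

namespace IsCompletelyPositive

variable {Φ : Matrix (Fin d) (Fin d) ℂ →ₗ[ℂ] Matrix (Fin d) (Fin d) ℂ}

theorem posSemidef_map (hCP : IsCompletelyPositive Φ) {A : Matrix (Fin d) (Fin d) ℂ}
    (hA : A.PosSemidef) : (Φ A).PosSemidef := by
  let e := Equiv.uniqueProd (Fin d) (Fin 1)
  -- the ampliation at level `1` is, definitionally, `Φ A` reindexed along `e`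
  have h : (ampliation Φ 1 (A.submatrix e e)).PosSemidef := hCP 1 _ (hA.submatrix e)
  exact (posSemidef_submatrix_equiv e).mp h

theorem map_conjTranspose (hCP : IsCompletelyPositive Φ) (x : Matrix (Fin d) (Fin d) ℂ) :
    Φ xᴴ = (Φ x)ᴴ :=
  let Ψ := PositiveLinearMap.mk₀ Φ fun _ hA ↦ (hCP.posSemidef_map hA.posSemidef).nonneg
  Φ.map_star_of_map_isSelfAdjoint (fun _ ha ↦ ha.map' Ψ) x

end IsCompletelyPositive

section multDomain

variable {Φ : Matrix (Fin d) (Fin d) ℂ →ₗ[ℂ] Matrix (Fin d) (Fin d) ℂ}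
  {x : Matrix (Fin d) (Fin d) ℂ}

theorem map_mul_of_mem_multDomain (hx : x ∈ multDomain Φ) (y : Matrix (Fin d) (Fin d) ℂ) :
    Φ (x * y) = Φ x * Φ y :=
  ((hx y).2).symm

theorem trace_map_mul_map_of_mem_multDomain (htp : ∀ a, (Φ a).trace = a.trace)
    (hx : x ∈ multDomain Φ) (y : Matrix (Fin d) (Fin d) ℂ) :
    (Φ x * Φ y).trace = (x * y).trace := by
  rw [← map_mul_of_mem_multDomain hx, htp]

theorem adjoint_map_of_mem_multDomain
    {Φad : Matrix (Fin d) (Fin d) ℂ →ₗ[ℂ] Matrix (Fin d) (Fin d) ℂ}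
    (htp : ∀ a, (Φ a).trace = a.trace)
    (hadj : ∀ a b : Matrix (Fin d) (Fin d) ℂ, (Φad a * b).trace = (a * Φ b).trace)
    (hx : x ∈ multDomain Φ) : Φad (Φ x) = x :=
  ext_iff_trace_mul_right.mpr fun y ↦ by rw [hadj, trace_map_mul_map_of_mem_multDomain htp hx]

end multDomain

theorem multiplicative_domain_properties_general
    (Φ Φad : Matrix (Fin d) (Fin d) ℂ →ₗ[ℂ] Matrix (Fin d) (Fin d) ℂ)
    (hCP : IsCompletelyPositive Φ)
    (htp : ∀ x, (Φ x).trace = x.trace)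
    (hadj : ∀ a b : Matrix (Fin d) (Fin d) ℂ, (Φad a * b).trace = (a * Φ b).trace) :
    (∀ x ∈ multDomain Φ, ∀ y ∈ multDomain Φ, Φ (x * y) = Φ x * Φ y) ∧
    (∀ x ∈ multDomain Φ, Φ xᴴ = (Φ x)ᴴ) ∧
    (∀ x ∈ multDomain Φ, ∀ y ∈ multDomain Φ, (Φ x * Φ y).trace = (x * y).trace) ∧
    (∀ x ∈ multDomain Φ, Φad (Φ x) = x) :=
  ⟨fun _ hx y _ ↦ map_mul_of_mem_multDomain hx y,
    fun x _ ↦ hCP.map_conjTranspose x,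
    fun _ hx y _ ↦ trace_map_mul_map_of_mem_multDomain htp hx y,
    fun _ hx ↦ adjoint_map_of_mem_multDomain htp hadj hx⟩

/-- on its multiplicative domain `N`, a unital quantum channel `Φ` is a
`*`-homomorphism, `tr(Φ(x)Φ(y)) = tr(xy)` for `x, y ∈ N`, and `Φ*∘Φ` restricted to `N`
is the identity. -/
theorem multiplicative_domain_properties
    (Φ Φad : Matrix (Fin d) (Fin d) ℂ →ₗ[ℂ] Matrix (Fin d) (Fin d) ℂ)
    (hCP : IsCompletelyPositive Φ) (hunital : Φ 1 = 1)
    (htp : ∀ x, (Φ x).trace = x.trace)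
    (hadj : ∀ a b : Matrix (Fin d) (Fin d) ℂ, (Φad a * b).trace = (a * Φ b).trace) :
    (∀ x ∈ multDomain Φ, ∀ y ∈ multDomain Φ, Φ (x * y) = Φ x * Φ y) ∧
    (∀ x ∈ multDomain Φ, Φ xᴴ = (Φ x)ᴴ) ∧
    (∀ x ∈ multDomain Φ, ∀ y ∈ multDomain Φ, (Φ x * Φ y).trace = (x * y).trace) ∧
    (∀ x ∈ multDomain Φ, Φad (Φ x) = x) :=
  multiplicative_domain_properties_general Φ Φad hCP htp hadj
end
end

section
/- For c > 1 define k(c) = (c·ln c − c + 1)/(c−1)². Then k is strictly decreasing on (1,∞), takes values in (0, 1/2), and k(2) = 2·ln 2 − 1. -/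
/-!
The numerator of `k` is the Kullback–Leibler function `klFun c = c log c + 1 - c`, which is
positive away from `c = 1`. The bound `k < 1/2` is `log c < sinh (log c) = (c - c⁻¹)/2`, and
`k' = (2(c-1) - (c+1) log c)/(c-1)³` is negative because `log c > 2(c-1)/(c+1)`, the first term
of the series `log c = 2 ∑ r^(2n+1)/(2n+1)` in `r = (c-1)/(c+1)`.
-/

noncomputable section

open Real Set InformationTheory

def kfun (c : ℝ) : ℝ := (c * Real.log c - c + 1) / (c - 1) ^ 2

lemma klFun_pos {x : ℝ} (hx : 0 ≤ x) (hx1 : x ≠ 1) : 0 < klFun x :=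
  (klFun_nonneg hx).lt_of_ne fun h ↦ hx1 ((klFun_eq_zero_iff hx).1 h.symm)

lemma log_lt_sub_inv_div_two {c : ℝ} (hc : 1 < c) : log c < (c - c⁻¹) / 2 := by
  rw [← sinh_log (by linarith)]
  exact self_lt_sinh_iff.2 (log_pos hc)

lemma two_mul_sub_one_div_add_one_lt_log {c : ℝ} (hc : 1 < c) :
    2 * (c - 1) / (c + 1) < log c := by
  have hfirst := lt_hasSum (hasSum_log_one_add (a := c - 1) (by linarith)) 0
    (fun _ _ ↦ by positivity) 1 one_ne_zero (by positivity)
  calc 2 * (c - 1) / (c + 1)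
      = 2 * (1 / (2 * ((0 : ℕ) : ℝ) + 1)) * ((c - 1) / (c - 1 + 2)) ^ (2 * 0 + 1) := by
        rw [show c - 1 + 2 = c + 1 by ring]
        simp only [CharP.cast_eq_zero]
        ring
    _ < log (1 + (c - 1)) := hfirst
    _ = log c := by rw [add_sub_cancel]

lemma kfun_eq_klFun_div (c : ℝ) : kfun c = klFun c / (c - 1) ^ 2 := by
  rw [kfun, klFun_apply]
  ring

lemma hasDerivAt_kfun {x : ℝ} (hx0 : x ≠ 0) (hx1 : x ≠ 1) :
    HasDerivAt kfun ((2 * (x - 1) - (x + 1) * log x) / (x - 1) ^ 3) x := by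
  have hsub : x - 1 ≠ 0 := sub_ne_zero.2 hx1
  have hden : HasDerivAt (fun c : ℝ ↦ (c - 1) ^ 2) (2 * (x - 1)) x := by
    simpa using ((hasDerivAt_id x).sub_const 1).fun_pow 2
  have hquot := (hasDerivAt_klFun hx0).fun_div hden (pow_ne_zero 2 hsub)
  rw [show kfun = fun c ↦ klFun c / (c - 1) ^ 2 from funext kfun_eq_klFun_div]
  refine hquot.congr_deriv ?_
  rw [klFun_apply]
  field_simp
  ring

lemma kfun_pos {c : ℝ} (hc : 1 < c) : 0 < kfun c := by
  rw [kfun_eq_klFun_div]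
  exact div_pos (klFun_pos (by linarith) hc.ne') (pow_pos (by linarith) 2)

lemma kfun_lt_one_half {c : ℝ} (hc : 1 < c) : kfun c < 1 / 2 := by
  have hlog : 2 * c * log c < c ^ 2 - 1 :=
    calc 2 * c * log c < 2 * c * ((c - c⁻¹) / 2) :=
          mul_lt_mul_of_pos_left (log_lt_sub_inv_div_two hc) (by linarith)
      _ = c ^ 2 - 1 := by field_simp
  rw [kfun, div_lt_iff₀ (pow_pos (by linarith) 2)]
  linarith

lemma strictAntiOn_kfun : StrictAntiOn kfun (Ioi 1) := by
  refine strictAntiOn_of_deriv_neg (convex_Ioi 1)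
    (fun x (hx : 1 < x) ↦ (hasDerivAt_kfun (by linarith) hx.ne').continuousAt.continuousWithinAt)
    fun x hx ↦ ?_
  rw [interior_Ioi, mem_Ioi] at hx
  rw [(hasDerivAt_kfun (by linarith) hx.ne').deriv]
  have hlog := two_mul_sub_one_div_add_one_lt_log hx
  rw [div_lt_iff₀ (by linarith)] at hlog
  exact div_neg_of_neg_of_pos (by linarith) (pow_pos (by linarith) 3)

lemma kfun_two : kfun 2 = 2 * log 2 - 1 := by
  norm_num [kfun]
  ring

/-- `k` is strictly decreasing on `(1,∞)`, takes values in `(0, 1/2)`,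
and `k(2) = 2 ln 2 − 1`. -/
theorem kfun_properties :
    StrictAntiOn kfun (Set.Ioi 1) ∧
    (∀ c ∈ Set.Ioi (1 : ℝ), kfun c ∈ Set.Ioo 0 (1 / 2)) ∧
    kfun 2 = 2 * Real.log 2 - 1 :=
  ⟨strictAntiOn_kfun, fun _ hc ↦ ⟨kfun_pos hc, kfun_lt_one_half hc⟩, kfun_two⟩
end
end
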